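/- Let F = x + F₂ + F₃ + F₄ and G = z + G₂ + ⋯ + G₆ with Fᵢ, Gᵢ ∈ ℂ[x,y,z] homogeneous of degree i. Suppose F₄ = H², G₆ = αH³, F₃ = H·F̃₁, G₅ = (3/2)αH²F̃₁ and G₄ = (3/8)αH·F̃₁² + (3/2)αH·F₂ + bH², where H is a squarefree homogeneous polynomial of degree 2, F̃₁ is homogeneous of degree 1, α ∈ ℂ with α ≠ 0, and b ∈ ℂ. If deg[F,G] < 7, then G₃ = −(1/16)α·F̃₁³ + b·H·F̃₁ + (3/2)α·H·x + (3/4)α·F̃₁·F₂. -/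

import Mathlib

/-!
The degree-7 part of `[F, G]` is `J(x, G₆) + J(F₂, G₅) + J(F₃, G₄) + J(F₄, G₃)`; for the given
`F₃, F₄, G₄, G₅, G₆` it equals `2H · J(H, D)`, where `D` is `G₃` minus the claimed cubic. Hence
`J(H, D) = 0`, which by Euler's identity reads `2H ∂ᵢD = 3D ∂ᵢH`. In characteristic zero no prime
factor of a squarefree `H` divides all the `∂ᵢH`, so `H ∣ D`, and the same relation for `D / H`
gives `H ∣ D / H`. Thus `H² ∣ D`, which forces `D = 0` in degree 3.
-/

open MvPolynomial

noncomputable def jacMinor (f g : MvPolynomial (Fin 3) ℂ) (i j : Fin 3) :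
    MvPolynomial (Fin 3) ℂ :=
  pderiv i f * pderiv j g - pderiv j f * pderiv i g

theorem Squarefree.dvd_of_forall_prime_dvd {α : Type*} [CommMonoidWithZero α]
    [UniqueFactorizationMonoid α] {x y : α} (hx : Squarefree x)
    (h : ∀ p, Prime p → p ∣ x → p ∣ y) : x ∣ y := by
  nontriviality α
  induction x using UniqueFactorizationMonoid.induction_on_prime with
  | h₁ => exact absurd hx not_squarefree_zero
  | h₂ u hu => exact hu.dvd
  | h₃ a p _ hp ih =>
    obtain ⟨c, rfl⟩ := ih hx.of_mul_right fun q hq hqa => h q hq (dvd_mul_of_dvd_right hqa p)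
    have hpa : ¬ p ∣ a := fun hpa => hp.not_isUnit (hx p (mul_dvd_mul_left p hpa))
    obtain ⟨d, rfl⟩ := (hp.dvd_or_dvd (h p hp (dvd_mul_right p a))).resolve_left hpa
    exact ⟨d, by rw [mul_assoc, mul_left_comm]⟩

namespace MvPolynomial

section

variable {σ R : Type*} [CommSemiring R]

theorem totalDegree_pderiv_lt {f : MvPolynomial σ R} {i : σ} (h : pderiv i f ≠ 0) :
    (pderiv i f).totalDegree < f.totalDegree := by
  have hlt : ∀ m ∈ (pderiv i f).support, (m.sum fun _ e => e) < f.totalDegree := by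
    intro m hm
    rw [mem_support_iff, coeff_pderiv] at hm
    have hle := le_totalDegree (mem_support_iff.mpr (left_ne_zero_of_mul hm))
    change (m + Finsupp.single i 1).degree ≤ _ at hle
    change m.degree < _
    rw [map_add, Finsupp.degree_single] at hle
    omega
  obtain ⟨m, hm⟩ := support_nonempty.mpr h
  exact (Finset.sup_lt_iff ((Nat.zero_le _).trans_lt (hlt m hm))).mpr hlt

theorem exists_pderiv_ne_zero [NoZeroDivisors R] [CharZero R] {f : MvPolynomial σ R}
    (hf : f.totalDegree ≠ 0) : ∃ i, pderiv i f ≠ 0 := by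
  obtain ⟨m, hm, hm0⟩ : ∃ m ∈ f.support, m ≠ 0 := by
    by_contra! h
    exact hf ((Finset.sup_eq_bot_iff _ _).mpr fun m hm => by simp [h m hm])
  obtain ⟨i, hi⟩ := Finsupp.support_nonempty_iff.mpr hm0
  have hle : Finsupp.single i 1 ≤ m :=
    Finsupp.single_le_iff.mpr (Nat.one_le_iff_ne_zero.mpr (Finsupp.mem_support_iff.mp hi))
  refine ⟨i, fun h0 => ?_⟩
  have hcoeff := congrArg (coeff (m - Finsupp.single i 1)) h0
  rw [coeff_pderiv, tsub_add_cancel_of_le hle, coeff_zero] at hcoeff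
  exact mul_ne_zero (mem_support_iff.mp hm) (Nat.cast_add_one_ne_zero _) hcoeff

theorem mul_pderiv_eq_of_pderiv_mul_comm [Fintype σ] {H D : MvPolynomial σ R} {m n : ℕ}
    (hH : H.IsHomogeneous m) (hD : D.IsHomogeneous n)
    (hJ : ∀ i j, pderiv i H * pderiv j D = pderiv j H * pderiv i D) (i : σ) :
    (m : MvPolynomial σ R) * H * pderiv i D = n * D * pderiv i H := by
  calc (m : MvPolynomial σ R) * H * pderiv i D = ∑ j, X j * (pderiv j H * pderiv i D) := by
        simp only [← nsmul_eq_mul, ← hH.sum_X_mul_pderiv, Finset.sum_mul, mul_assoc]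
    _ = ∑ j, X j * (pderiv j D * pderiv i H) :=
        Finset.sum_congr rfl fun j _ => by rw [hJ j i, mul_comm (pderiv i H)]
    _ = n * D * pderiv i H := by
        simp only [← nsmul_eq_mul, ← hD.sum_X_mul_pderiv, Finset.sum_mul, mul_assoc]

end

variable {σ K : Type*} [Field K] [CharZero K]

theorem _root_.Prime.exists_not_dvd_pderiv {p : MvPolynomial σ K} (hp : Prime p) :
    ∃ i, ¬ p ∣ pderiv i p := by
  have hdeg : p.totalDegree ≠ 0 := by
    intro h0
    have hpC := totalDegree_eq_zero_iff_eq_C.mp h0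
    have hc : p.coeff 0 ≠ 0 := fun hc => hp.ne_zero (by rw [hpC, hc, map_zero])
    exact hp.not_isUnit (by rw [hpC]; exact hc.isUnit.map C)
  obtain ⟨i, hi⟩ := exists_pderiv_ne_zero hdeg
  exact ⟨i, fun hdvd =>
    (totalDegree_pderiv_lt hi).not_ge (totalDegree_le_of_dvd_of_isDomain hdvd hi)⟩

theorem _root_.Squarefree.dvd_of_forall_dvd_mul_pderiv {H W : MvPolynomial σ K}
    (hH : Squarefree H) (h : ∀ i, H ∣ W * pderiv i H) : H ∣ W := by
  refine Squarefree.dvd_of_forall_prime_dvd hH fun p hp hpH => ?_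
  by_contra hpW
  obtain ⟨i, hi⟩ := hp.exists_not_dvd_pderiv
  obtain ⟨q, rfl⟩ := hpH
  have hpq : ¬ p ∣ q := fun hpq => hp.not_isUnit (hH p (mul_dvd_mul_left p hpq))
  have hdvd : p ∣ W * q * pderiv i p := by
    have hpq := (dvd_mul_right p q).trans (h i)
    rw [pderiv_mul, show W * (pderiv i p * q + p * pderiv i q)
      = W * q * pderiv i p + p * (W * pderiv i q) by ring] at hpq
    exact (dvd_add_left (dvd_mul_right p _)).mp hpq
  rcases hp.dvd_or_dvd hdvd with hWq | hpp
  · exact (hp.dvd_or_dvd hWq).elim hpW hpq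
  · exact hi hpp

theorem _root_.Squarefree.dvd_of_mul_pderiv_eq {H D : MvPolynomial σ K} {m n : ℕ}
    (hH : Squarefree H) (hn : n ≠ 0)
    (h : ∀ i, (m : MvPolynomial σ K) * H * pderiv i D = n * D * pderiv i H) : H ∣ D := by
  have hu : IsUnit (n : MvPolynomial σ K) := by
    rw [← map_natCast C]
    exact (Nat.cast_ne_zero.mpr hn).isUnit.map C
  refine hH.dvd_of_forall_dvd_mul_pderiv fun i => ?_
  rw [← hu.dvd_mul_left, ← mul_assoc, ← h i, mul_comm (m : MvPolynomial σ K), mul_assoc]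
  exact dvd_mul_right _ _

theorem eq_zero_of_pderiv_mul_comm [Fintype σ] {H D : MvPolynomial σ K} (hH : Squarefree H)
    (hH2 : H.IsHomogeneous 2) (hD3 : D.IsHomogeneous 3)
    (hJ : ∀ i j, pderiv i H * pderiv j D = pderiv j H * pderiv i D) : D = 0 := by
  have hrel := mul_pderiv_eq_of_pderiv_mul_comm hH2 hD3 hJ
  obtain ⟨L, rfl⟩ := hH.dvd_of_mul_pderiv_eq three_ne_zero hrel
  have hL : ∀ i, ((2 : ℕ) : MvPolynomial σ K) * H * pderiv i L = (1 : ℕ) * L * pderiv i H := by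
    intro i
    refine mul_left_cancel₀ hH.ne_zero ?_
    have hi := hrel i
    rw [pderiv_mul] at hi
    push_cast at hi ⊢
    linear_combination hi
  obtain ⟨M, rfl⟩ := hH.dvd_of_mul_pderiv_eq one_ne_zero hL
  by_contra hD
  have hle := totalDegree_le_of_dvd_of_isDomain (mul_dvd_mul_left H (dvd_mul_right H M)) hD
  rw [(hH2.mul hH2).totalDegree (mul_ne_zero hH.ne_zero hH.ne_zero), hD3.totalDegree hD] at hle
  omega

end MvPolynomial

section JacobianMinor

variable (i j : Fin 3)

theorem jacMinor_sum_sum {ι κ : Type*} (s : Finset ι) (t : Finset κ)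
    (f : ι → MvPolynomial (Fin 3) ℂ) (g : κ → MvPolynomial (Fin 3) ℂ) :
    jacMinor (∑ a ∈ s, f a) (∑ b ∈ t, g b) i j = ∑ a ∈ s, ∑ b ∈ t, jacMinor (f a) (g b) i j := by
  simp only [jacMinor, map_sum, Finset.sum_mul_sum, ← Finset.sum_sub_distrib]

theorem homogeneousComponent_jacMinor {f g : MvPolynomial (Fin 3) ℂ} {a b : ℕ}
    (hf : f.IsHomogeneous a) (hg : g.IsHomogeneous b) (k : ℕ) :
    homogeneousComponent k (jacMinor f g i j)
      = if k = a - 1 + (b - 1) then jacMinor f g i j else 0 :=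
  homogeneousComponent_of_mem ((hf.pderiv.mul hg.pderiv).sub (hf.pderiv.mul hg.pderiv))

theorem jacMinor_degree_five_part_eq_zero
    {F1 F2 F3 F4 G1 G2 G3 G4 G5 G6 : MvPolynomial (Fin 3) ℂ}
    (hF1 : F1.IsHomogeneous 1) (hF2 : F2.IsHomogeneous 2) (hF3 : F3.IsHomogeneous 3)
    (hF4 : F4.IsHomogeneous 4) (hG1 : G1.IsHomogeneous 1) (hG2 : G2.IsHomogeneous 2)
    (hG3 : G3.IsHomogeneous 3) (hG4 : G4.IsHomogeneous 4) (hG5 : G5.IsHomogeneous 5)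
    (hG6 : G6.IsHomogeneous 6)
    (h : (jacMinor (F1 + F2 + F3 + F4) (G1 + G2 + G3 + G4 + G5 + G6) i j).totalDegree < 5) :
    jacMinor F1 G6 i j + jacMinor F2 G5 i j + jacMinor F3 G4 i j + jacMinor F4 G3 i j = 0 := by
  have hF : F1 + F2 + F3 + F4 = ∑ a, ![F1, F2, F3, F4] a := by
    simp [Fin.sum_univ_succ, add_assoc]
  have hG : G1 + G2 + G3 + G4 + G5 + G6 = ∑ b, ![G1, G2, G3, G4, G5, G6] b := by
    simp [Fin.sum_univ_succ, add_assoc]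
  have h5 := homogeneousComponent_eq_zero 5 _ h
  rw [hF, hG, jacMinor_sum_sum] at h5
  have hFa : ∀ a : Fin 4, (![F1, F2, F3, F4] a).IsHomogeneous (a + 1) := by
    intro a; fin_cases a <;> assumption
  have hGb : ∀ b : Fin 6, (![G1, G2, G3, G4, G5, G6] b).IsHomogeneous (b + 1) := by
    intro b; fin_cases b <;> assumption
  simp only [map_sum, homogeneousComponent_jacMinor _ _ (hFa _) (hGb _), Nat.add_sub_cancel] at h5
  simpa [Fin.sum_univ_succ, add_assoc] using h5

theorem jacMinor_degree_five_part_eq (x F1 F2 G3 H : MvPolynomial (Fin 3) ℂ) (α b : ℂ) :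
    jacMinor x (C α * H ^ 3) i j + jacMinor F2 (C ((3 / 2) * α) * H ^ 2 * F1) i j
      + jacMinor (H * F1)
          (C ((3 / 8) * α) * H * F1 ^ 2 + C ((3 / 2) * α) * H * F2 + C b * H ^ 2) i j
      + jacMinor (H ^ 2) G3 i j
      = 2 * H * jacMinor H (G3 - (-(C ((1 / 16) * α) * F1 ^ 3) + C b * H * F1
          + C ((3 / 2) * α) * H * x + C ((3 / 4) * α) * F1 * F2)) i j := by
  -- with `α = 16γ` every coefficient is an integer multiple of `C γ`, which `ring` can handle
  obtain ⟨γ, rfl⟩ : ∃ γ, α = 16 * γ := ⟨α / 16, by ring⟩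
  simp only [jacMinor, map_add, map_sub, map_neg, pderiv_mul, pderiv_pow, pderiv_C]
  simp only [show (3 / 2 : ℂ) * (16 * γ) = 24 * γ by ring,
    show (3 / 8 : ℂ) * (16 * γ) = 6 * γ by ring, show (1 / 16 : ℂ) * (16 * γ) = γ by ring,
    show (3 / 4 : ℂ) * (16 * γ) = 12 * γ by ring, map_mul, map_ofNat]
  ring

end JacobianMinor

theorem stmt6_general (F2 F3 F4 G2 G3 G4 G5 G6 H F1t : MvPolynomial (Fin 3) ℂ) (α b : ℂ)
    (hF2 : F2.IsHomogeneous 2) (hF3 : F3.IsHomogeneous 3) (hF4 : F4.IsHomogeneous 4)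
    (hG2 : G2.IsHomogeneous 2) (hG3 : G3.IsHomogeneous 3) (hG4 : G4.IsHomogeneous 4)
    (hG5 : G5.IsHomogeneous 5) (hG6 : G6.IsHomogeneous 6)
    (hHsf : Squarefree H) (hHhom : H.IsHomogeneous 2) (hF1t : F1t.IsHomogeneous 1)
    (hF4eq : F4 = H ^ 2) (hG6eq : G6 = C α * H ^ 3)
    (hF3eq : F3 = H * F1t)
    (hG5eq : G5 = C ((3 / 2) * α) * H ^ 2 * F1t)
    (hG4eq : G4 = C ((3 / 8) * α) * H * F1t ^ 2 + C ((3 / 2) * α) * H * F2 + C b * H ^ 2)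
    (hbr : ∀ i j : Fin 3, (jacMinor (X 0 + F2 + F3 + F4) (X 2 + G2 + G3 + G4 + G5 + G6) i j).totalDegree < 5) :
    G3 = -(C ((1 / 16) * α) * F1t ^ 3) + C b * H * F1t + C ((3 / 2) * α) * H * X 0
      + C ((3 / 4) * α) * F1t * F2 := by
  have hX (k : Fin 3) : (X k : MvPolynomial (Fin 3) ℂ).IsHomogeneous 1 := isHomogeneous_X ℂ k
  have hD : (G3 - (-(C ((1 / 16) * α) * F1t ^ 3) + C b * H * F1t + C ((3 / 2) * α) * H * X 0
      + C ((3 / 4) * α) * F1t * F2)).IsHomogeneous 3 :=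
    hG3.sub (((((hF1t.pow 3).C_mul _).neg.add ((hHhom.C_mul b).mul hF1t)).add
      ((hHhom.C_mul _).mul (hX 0))).add ((hF1t.C_mul _).mul hF2))
  refine sub_eq_zero.mp (MvPolynomial.eq_zero_of_pderiv_mul_comm hHsf hHhom hD fun i j => ?_)
  have hdeg5 := jacMinor_degree_five_part_eq_zero i j (hX 0) hF2 hF3 hF4 (hX 2) hG2 hG3 hG4 hG5 hG6
    (hbr i j)
  rw [hF3eq, hF4eq, hG4eq, hG5eq, hG6eq, jacMinor_degree_five_part_eq] at hdeg5
  exact sub_eq_zero.mp ((mul_eq_zero.mp hdeg5).resolve_left (mul_ne_zero two_ne_zero hHsf.ne_zero))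

theorem stmt6 (F2 F3 F4 G2 G3 G4 G5 G6 H F1t : MvPolynomial (Fin 3) ℂ) (α b : ℂ)
    (hF2 : F2.IsHomogeneous 2) (hF3 : F3.IsHomogeneous 3) (hF4 : F4.IsHomogeneous 4)
    (hG2 : G2.IsHomogeneous 2) (hG3 : G3.IsHomogeneous 3) (hG4 : G4.IsHomogeneous 4)
    (hG5 : G5.IsHomogeneous 5) (hG6 : G6.IsHomogeneous 6)
    (hHsf : Squarefree H) (hHhom : H.IsHomogeneous 2) (hF1t : F1t.IsHomogeneous 1)
    (hα : α ≠ 0)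
    (hF4eq : F4 = H ^ 2) (hG6eq : G6 = C α * H ^ 3)
    (hF3eq : F3 = H * F1t)
    (hG5eq : G5 = C ((3 / 2) * α) * H ^ 2 * F1t)
    (hG4eq : G4 = C ((3 / 8) * α) * H * F1t ^ 2 + C ((3 / 2) * α) * H * F2 + C b * H ^ 2)
    (hbr : ∀ i j : Fin 3, (jacMinor (X 0 + F2 + F3 + F4) (X 2 + G2 + G3 + G4 + G5 + G6) i j).totalDegree < 5) :
    G3 = -(C ((1 / 16) * α) * F1t ^ 3) + C b * H * F1t + C ((3 / 2) * α) * H * X 0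
      + C ((3 / 4) * α) * F1t * F2 :=
  stmt6_general F2 F3 F4 G2 G3 G4 G5 G6 H F1t α b hF2 hF3 hF4 hG2 hG3 hG4 hG5 hG6 hHsf hHhom hF1t
    hF4eq hG6eq hF3eq hG5eq hG4eq hbr
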